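/- Let C = ⟨n, Q, q_init, δ⟩ be a counter machine and ℂ the Σ_C-Nmatrix induced by C. For every valuation v ∈ Val(ℂ), the restriction of v to the set of numeral formulas {enc(a) : a ∈ ℕ_0} equals one of the following: (a) v_=, where v_=(enc(0)) = r_{=0}, v_=(enc(1)) = r_{≥1}, and v_=(enc(a)) = r_{≥2} for all a > 1; (b) v_ω, where v_ω(enc(a)) = r_{≥0} for all a ∈ ℕ_0; (c) v_k for some k ∈ ℕ_0, where v_k(enc(a)) = r_{≥0} for all a ≤ k, v_k(enc(k+1)) = r_{≥1}, and v_k(enc(a)) = r_{≥2} for all a > k+1. -/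

import Mathlib

structure Signature where
  Conn : Type
  arity : Conn → ℕ

inductive Fm (S : Signature) : Type where
  | var : ℕ → Fm S
  | app : (c : S.Conn) → (Fin (S.arity c) → Fm S) → Fm S

def Fm.subst {S : Signature} (σ : ℕ → Fm S) : Fm S → Fm S
  | .var i => σ i
  | .app c args => .app c (fun j => (args j).subst σ)

def Fm.varsLT {S : Signature} (n : ℕ) : Fm S → Prop
  | .var i => i < n
  | .app _ args => ∀ j, (args j).varsLT n

structure NMatrix (S : Signature) (V : Type) where
  D : Set V
  interp : (c : S.Conn) → (Fin (S.arity c) → V) → Set V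
  interp_nonempty : ∀ c args, (interp c args).Nonempty

def IsVal {S : Signature} {V : Type} (M : NMatrix S V) (v : Fm S → V) : Prop :=
  ∀ (c : S.Conn) (args : Fin (S.arity c) → Fm S),
    v (Fm.app c args) ∈ M.interp c (fun i => v (args i))

def Entails {S : Signature} {V : Type} (M : NMatrix S V) (Γ : Set (Fm S)) (A : Fm S) : Prop :=
  ∀ v, IsVal M v → (∀ B ∈ Γ, v B ∈ M.D) → v A ∈ M.D

def Interderiv {S : Signature} {V : Type} (M : NMatrix S V) (A B : Fm S) : Prop :=
  Entails M {A} B ∧ Entails M {B} A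

def Deterministic {S : Signature} {V : Type} (M : NMatrix S V) : Prop :=
  ∀ c args, ∃ x, M.interp c args = {x}

inductive CMNum : Type where
  | r0 | ge0 | ge1 | ge2
deriving DecidableEq

inductive CMInstr (n : ℕ) (Q : Type) : Type where
  | inc : Fin n → Q → CMInstr n Q
  | dec : Fin n → Q → Q → CMInstr n Q

structure CounterMachine where
  n : ℕ
  Q : Type
  finQ : Finite Q
  qinit : Q
  δ : Q → Option (CMInstr n Q)

inductive CMVal (C : CounterMachine) : Type where
  | num : CMNum → CMVal C
  | conf : C.Q → (Fin C.n → CMNum) → CMVal C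
  | init : CMVal C
  | error : CMVal C

inductive CMConn (C : CounterMachine) : Type where
  | zero : CMConn C
  | eps : CMConn C
  | succ : CMConn C
  | step : C.Q → CMConn C

def CMSig (C : CounterMachine) : Signature where
  Conn := CMConn C
  arity := fun c => match c with
    | .zero => 0
    | .eps => 0
    | .succ => 1
    | .step _ => C.n + 1

/-- Interpretation of `succ` on abstract numbers. -/
def zeroNum : Set CMNum := {.r0, .ge0}

def succNum : CMNum → Set CMNum
  | .r0 => {.ge1}
  | .ge0 => {.ge0, .ge1}
  | .ge1 => {.ge2}
  | .ge2 => {.ge2}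

/-- Interpretation of `succ` in the Nmatrix induced by `C`. -/
def succC (C : CounterMachine) : CMVal C → Set (CMVal C)
  | .num x => CMVal.num '' succNum x
  | _ => {.error}

/-- Interpretation of `zero` in the Nmatrix induced by `C`. -/
def zeroC (C : CounterMachine) : Set (CMVal C) := {.num .r0, .num .ge0}

/-- The condition under which `step^q` applied to `x` and a tuple of numbers `zn`
produces the configuration value `conf q zn`. -/
def stepOK (C : CounterMachine) (q : C.Q) (x : CMVal C) (zn : Fin C.n → CMNum) : Prop :=
  (x = CMVal.init ∧ q = C.qinit ∧ ((∀ i, zn i = .r0) ∨ (∀ i, zn i = .ge0))) ∨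
  (∃ (q' : C.Q) (yn : Fin C.n → CMNum), x = CMVal.conf q' yn ∧
    ((∃ i, C.δ q' = some (.inc i q) ∧ zn i ∈ succNum (yn i) ∧ ∀ l, l ≠ i → zn l = yn l) ∨
     (∃ i s, C.δ q' = some (.dec i q s) ∧ yn i ∈ succNum (zn i) ∧ ∀ l, l ≠ i → zn l = yn l) ∨
     (∃ i s, C.δ q' = some (.dec i s q) ∧ yn i ∈ zeroNum ∧ zn = yn)))

/-- Interpretation of `step^q` in the Nmatrix induced by `C`. -/
def stepC (C : CounterMachine) (q : C.Q) (x : CMVal C) (z : Fin C.n → CMVal C) :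
    Set (CMVal C) :=
  { w | (∃ zn : Fin C.n → CMNum, (∀ i, z i = .num (zn i)) ∧ stepOK C q x zn ∧
          w = .conf q zn) ∨
        (¬ (∃ zn : Fin C.n → CMNum, (∀ i, z i = .num (zn i)) ∧ stepOK C q x zn) ∧
          w = .error) }

lemma succC_nonempty (C : CounterMachine) (x : CMVal C) : (succC C x).Nonempty := by
  cases x with
  | num y =>
      cases y
      · exact ⟨.num .ge1, by simp [succC, succNum]⟩
      · exact ⟨.num .ge0, by simp [succC, succNum]⟩
      · exact ⟨.num .ge2, by simp [succC, succNum]⟩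
      · exact ⟨.num .ge2, by simp [succC, succNum]⟩
  | conf q r => exact ⟨.error, rfl⟩
  | init => exact ⟨.error, rfl⟩
  | error => exact ⟨.error, rfl⟩

lemma stepC_nonempty (C : CounterMachine) (q : C.Q) (x : CMVal C)
    (z : Fin C.n → CMVal C) : (stepC C q x z).Nonempty := by
  by_cases h : ∃ zn : Fin C.n → CMNum, (∀ i, z i = .num (zn i)) ∧ stepOK C q x zn
  · obtain ⟨zn, hz, hok⟩ := h
    exact ⟨.conf q zn, Or.inl ⟨zn, hz, hok, rfl⟩⟩
  · exact ⟨.error, Or.inr ⟨h, rfl⟩⟩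

/-- The Nmatrix ℂ induced by the counter machine `C`. -/
def CMmatrix (C : CounterMachine) : NMatrix (CMSig C) (CMVal C) where
  D := { w | ∃ (q : C.Q) (r : Fin C.n → CMNum), w = CMVal.conf q r ∧ C.δ q = none }
  interp := fun c => match c with
    | .zero => fun _ => zeroC C
    | .eps => fun _ => {CMVal.init}
    | .succ => fun args => succC C (args ⟨0, Nat.one_pos⟩)
    | .step q => fun args => stepC C q (args ⟨0, Nat.succ_pos _⟩) (fun i => args i.succ)
  interp_nonempty := by
    intro c args
    cases c with
    | zero => exact ⟨.num .r0, Or.inl rfl⟩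
    | eps => exact ⟨.init, rfl⟩
    | succ => exact succC_nonempty C _
    | step q => exact stepC_nonempty C q _ _

/-- Encoding of natural numbers as closed formulas. -/
def enc (C : CounterMachine) : ℕ → Fm (CMSig C)
  | 0 => .app .zero (fun i => i.elim0)
  | a + 1 => .app .succ (fun _ => enc C a)


/-! A valuation sends every numeral to a number value, so on numerals it is a sequence that
starts in `zeroNum` and moves along `succNum`. Once the sequence reaches `r≥₁` it is `r≥₂`
forever, and the only way to reach `r≥₁` is from `r₌₀` or from a run of `r≥₀`. -/

namespace CMNum

section Chain

variable {s : ℕ → CMNum}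

theorem eq_ge2_of_eq_ge1 (hs : ∀ a, s (a + 1) ∈ succNum (s a)) {m : ℕ} (hm : s m = .ge1)
    {a : ℕ} (ha : m < a) : s a = .ge2 := by
  induction a, ha using Nat.le_induction with
  | base => simpa [hm, succNum] using hs m
  | succ a _ ih => simpa [ih, succNum] using hs a

theorem eq_ge1_of_eq_ge0_of_ne_ge0 (hs : ∀ a, s (a + 1) ∈ succNum (s a)) {k : ℕ}
    (hk : s k = .ge0) (hk1 : s (k + 1) ≠ .ge0) : s (k + 1) = .ge1 := by
  have := hs k
  simp only [hk, succNum, Set.mem_insert_iff, Set.mem_singleton_iff] at this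
  exact this.resolve_left hk1

theorem chain_cases (hs : ∀ a, s (a + 1) ∈ succNum (s a)) (h0 : s 0 ∈ zeroNum) :
    (s 0 = .r0 ∧ s 1 = .ge1 ∧ ∀ a, 1 < a → s a = .ge2) ∨
    (∀ a, s a = .ge0) ∨
    (∃ k, (∀ a, a ≤ k → s a = .ge0) ∧ s (k + 1) = .ge1 ∧
      ∀ a, k + 1 < a → s a = .ge2) := by
  rcases h0 with h0 | h0
  · have h1 : s 1 = .ge1 := by simpa [h0, succNum] using hs 0
    exact Or.inl ⟨h0, h1, fun a => eq_ge2_of_eq_ge1 hs h1⟩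
  by_cases hall : ∀ a, s a = .ge0
  · exact Or.inr (Or.inl hall)
  push Not at hall
  obtain ⟨k, hk⟩ : ∃ k, Nat.find hall = k + 1 :=
    Nat.exists_eq_succ_of_ne_zero fun h => Nat.find_spec hall (h ▸ h0)
  have hle : ∀ a, a ≤ k → s a = .ge0 := fun a ha =>
    not_not.mp (Nat.find_min hall (by omega))
  have hk1 : s (k + 1) = .ge1 :=
    eq_ge1_of_eq_ge0_of_ne_ge0 hs (hle k le_rfl) (hk ▸ Nat.find_spec hall)
  exact Or.inr (Or.inr ⟨k, hle, hk1, fun a => eq_ge2_of_eq_ge1 hs hk1⟩)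

end Chain

end CMNum

section Valuation

variable {C : CounterMachine} {v : Fm (CMSig C) → CMVal C}

theorem IsVal.enc_zero_mem (hv : IsVal (CMmatrix C) v) : v (enc C 0) ∈ zeroC C :=
  hv .zero _

theorem IsVal.enc_succ_mem (hv : IsVal (CMmatrix C) v) (a : ℕ) :
    v (enc C (a + 1)) ∈ succC C (v (enc C a)) :=
  hv .succ fun _ => enc C a

theorem IsVal.exists_enc_eq_num (hv : IsVal (CMmatrix C) v) :
    ∃ s : ℕ → CMNum, (∀ a, v (enc C a) = .num (s a)) ∧ s 0 ∈ zeroNum ∧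
      ∀ a, s (a + 1) ∈ succNum (s a) := by
  have hnum : ∀ a, ∃ x, v (enc C a) = .num x := by
    intro a
    induction a with
    | zero => rcases hv.enc_zero_mem with h | h <;> exact ⟨_, h⟩
    | succ a ih =>
      obtain ⟨x, hx⟩ := ih
      obtain ⟨y, -, hy⟩ := hx ▸ hv.enc_succ_mem a
      exact ⟨y, hy.symm⟩
  choose s hs using hnum
  refine ⟨s, hs, ?_, fun a => ?_⟩
  · have h0 := hv.enc_zero_mem
    rw [hs 0] at h0
    rcases h0 with h | h <;> simp [CMVal.num.inj h, zeroNum]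
  · have hsucc := hv.enc_succ_mem a
    rw [hs a, hs (a + 1)] at hsucc
    obtain ⟨y, hy, hyx⟩ := hsucc
    cases hyx
    exact hy

end Valuation

/-- Every valuation of the Nmatrix ℂ induced by a counter machine C restricts,
on the numerals enc(a), to one of: v_= (case (a)), v_ω (case (b)), or v_k for some k (case (c)). -/
theorem stmt_4 (C : CounterMachine) (v : Fm (CMSig C) → CMVal C)
    (hv : IsVal (CMmatrix C) v) :
    (v (enc C 0) = .num .r0 ∧ v (enc C 1) = .num .ge1 ∧
      ∀ a, 1 < a → v (enc C a) = .num .ge2) ∨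
    (∀ a, v (enc C a) = .num .ge0) ∨
    (∃ k, (∀ a, a ≤ k → v (enc C a) = .num .ge0) ∧ v (enc C (k+1)) = .num .ge1 ∧
      ∀ a, k + 1 < a → v (enc C a) = .num .ge2) := by
  obtain ⟨s, hvs, h0, hsucc⟩ := hv.exists_enc_eq_num
  simp only [hvs, CMVal.num.injEq]
  exact CMNum.chain_cases hsucc h0
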